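/- arXiv:2104.07942 — 2 statements merged into one kernel-verified Lean document; each statement's English description precedes it below -/
import Mathlib

section
/- For $0<b$ and any $y\in(-b,b)$, the Cauchy principal value $P\int_{-b}^{b}\frac{dx}{(x-y)\sqrt{b^2-x^2}}=0$. -/
open Filter

/-!
With `s = √(b² - y²)`, the function
`F x = (log (x - y) - log (b² - x y + s √(b² - x²))) / s`
is an antiderivative of `1 / ((x - y) √(b² - x²))` on both sides of `y`, because Mathlib's
`Real.log` is `log |·|`. The truncated integral is therefore `F (y - ε) - F (y + ε) + F b - F (-b)`.
The boundary terms cancel (both equal `-log b / s`), and the logarithmic singularities of `F` at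
`y ± ε` cancel as well, leaving a continuous function of `ε` that vanishes at `ε = 0`.
-/

open Set Real

namespace intervalIntegral

theorem integral_eq_sub_of_hasDerivAt_of_nonneg {f f' : ℝ → ℝ} {a b : ℝ} (hab : a ≤ b)
    (hcont : ContinuousOn f (Icc a b)) (hderiv : ∀ x ∈ Ioo a b, HasDerivAt f (f' x) x)
    (hpos : ∀ x ∈ Ioo a b, 0 ≤ f' x) : ∫ x in a..b, f' x = f b - f a :=
  integral_eq_sub_of_hasDerivAt_of_le hab hcont hderiv <|
    (intervalIntegrable_iff_integrableOn_Ioc_of_le hab).2 <|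
      integrableOn_deriv_of_nonneg hcont hderiv hpos

theorem integral_eq_sub_of_hasDerivAt_of_nonpos {f f' : ℝ → ℝ} {a b : ℝ} (hab : a ≤ b)
    (hcont : ContinuousOn f (Icc a b)) (hderiv : ∀ x ∈ Ioo a b, HasDerivAt f (f' x) x)
    (hneg : ∀ x ∈ Ioo a b, f' x ≤ 0) : ∫ x in a..b, f' x = f b - f a := by
  have h := integral_eq_sub_of_hasDerivAt_of_nonneg (f := -f) (f' := -f') hab hcont.neg
    (fun x hx => (hderiv x hx).neg) (fun x hx => neg_nonneg.2 (hneg x hx))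
  simp only [Pi.neg_apply, integral_neg] at h
  linarith

end intervalIntegral

noncomputable section

def pvDenom (b y x : ℝ) : ℝ :=
  b ^ 2 - x * y + √(b ^ 2 - y ^ 2) * √(b ^ 2 - x ^ 2)

def pvAntideriv (b y x : ℝ) : ℝ :=
  (log (x - y) - log (pvDenom b y x)) / √(b ^ 2 - y ^ 2)

end

section

variable {b y : ℝ}

theorem continuous_pvDenom : Continuous (pvDenom b y) := by
  unfold pvDenom; fun_prop

theorem pvDenom_pos (hy : y ∈ Ioo (-b) b) {x : ℝ} (hx : x ∈ Icc (-b) b) : 0 < pvDenom b y x := by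
  obtain ⟨hy₁, hy₂⟩ := hy
  obtain ⟨hx₁, hx₂⟩ := hx
  have : 0 < b ^ 2 - x * y := by rcases le_total 0 y with hy₀ | hy₀ <;> nlinarith
  unfold pvDenom
  positivity

theorem pvDenom_right : pvDenom b y b = b * (b - y) := by
  simp only [pvDenom, sub_self, sqrt_zero, mul_zero, add_zero]; ring

theorem pvDenom_left : pvDenom b y (-b) = b * (b + y) := by
  simp only [pvDenom, neg_sq, sub_self, sqrt_zero, mul_zero, add_zero]; ring

theorem hasDerivAt_pvAntideriv (hy : y ∈ Ioo (-b) b) {x : ℝ} (hx : x ∈ Ioo (-b) b) (hxy : x ≠ y) :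
    HasDerivAt (pvAntideriv b y) (1 / ((x - y) * √(b ^ 2 - x ^ 2))) x := by
  obtain ⟨hy₁, hy₂⟩ := hy
  obtain ⟨hx₁, hx₂⟩ := hx
  have hs : √(b ^ 2 - y ^ 2) ^ 2 = b ^ 2 - y ^ 2 := sq_sqrt (by nlinarith)
  have hs₀ : 0 < √(b ^ 2 - y ^ 2) := sqrt_pos.2 (by nlinarith)
  have hr : √(b ^ 2 - x ^ 2) ^ 2 = b ^ 2 - x ^ 2 := sq_sqrt (by nlinarith)
  have hx₀ : 0 < b ^ 2 - x ^ 2 := by nlinarith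
  have hr₀ : 0 < √(b ^ 2 - x ^ 2) := sqrt_pos.2 hx₀
  have hD := pvDenom_pos ⟨hy₁, hy₂⟩ (x := x) ⟨hx₁.le, hx₂.le⟩
  have hsqrt : HasDerivAt (fun x => √(b ^ 2 - x ^ 2)) (-(2 * x) / (2 * √(b ^ 2 - x ^ 2))) x := by
    simpa using ((hasDerivAt_pow 2 x).const_sub (b ^ 2)).sqrt hx₀.ne'
  have hDeriv : HasDerivAt (pvDenom b y)
      (-y + √(b ^ 2 - y ^ 2) * (-(2 * x) / (2 * √(b ^ 2 - x ^ 2)))) x :=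
    ((((hasDerivAt_id' x).mul_const y).const_sub (b ^ 2)).add (hsqrt.const_mul _)).congr_deriv
      (by ring)
  refine (((((hasDerivAt_id' x).sub_const y).log (sub_ne_zero.2 hxy)).sub
    (hDeriv.log hD.ne')).div_const √(b ^ 2 - y ^ 2)).congr_deriv ?_
  unfold pvDenom at hD ⊢
  field_simp
  linear_combination √(b ^ 2 - y ^ 2) * hr - √(b ^ 2 - x ^ 2) * hs

theorem continuousOn_pvAntideriv (hy : y ∈ Ioo (-b) b) {u v : ℝ} (hu : -b ≤ u) (hv : v ≤ b)
    (hyuv : y ∉ Icc u v) : ContinuousOn (pvAntideriv b y) (Icc u v) := by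
  refine ((ContinuousOn.log (by fun_prop) fun _ hx => ?_).sub
    (continuous_pvDenom.continuousOn.log fun _ hx => ?_)).div_const _
  · exact sub_ne_zero.2 (ne_of_mem_of_not_mem hx hyuv)
  · exact (pvDenom_pos hy ⟨hu.trans hx.1, hx.2.trans hv⟩).ne'

theorem integral_pv_left (hy : y ∈ Ioo (-b) b) {v : ℝ} (hv₁ : -b ≤ v) (hv₂ : v < y) :
    ∫ x in (-b)..v, 1 / ((x - y) * √(b ^ 2 - x ^ 2)) = pvAntideriv b y v - pvAntideriv b y (-b) :=
  intervalIntegral.integral_eq_sub_of_hasDerivAt_of_nonpos hv₁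
    (continuousOn_pvAntideriv hy le_rfl (hv₂.trans hy.2).le fun h => hv₂.not_ge h.2)
    (fun _ hx => hasDerivAt_pvAntideriv hy ⟨hx.1, hx.2.trans (hv₂.trans hy.2)⟩ (hx.2.trans hv₂).ne)
    fun _ hx => one_div_nonpos.2 <|
      mul_nonpos_of_nonpos_of_nonneg (sub_nonpos.2 (hx.2.trans hv₂).le) (sqrt_nonneg _)

theorem integral_pv_right (hy : y ∈ Ioo (-b) b) {u : ℝ} (hu₁ : y < u) (hu₂ : u ≤ b) :
    ∫ x in u..b, 1 / ((x - y) * √(b ^ 2 - x ^ 2)) = pvAntideriv b y b - pvAntideriv b y u :=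
  intervalIntegral.integral_eq_sub_of_hasDerivAt_of_nonneg hu₂
    (continuousOn_pvAntideriv hy (hy.1.trans hu₁).le le_rfl fun h => hu₁.not_ge h.1)
    (fun _ hx => hasDerivAt_pvAntideriv hy ⟨(hy.1.trans hu₁).trans hx.1, hx.2⟩ (hu₁.trans hx.1).ne')
    fun _ hx => one_div_nonneg.2 <|
      mul_nonneg (sub_nonneg.2 (hu₁.trans hx.1).le) (sqrt_nonneg _)

theorem pvAntideriv_left_eq_right (hy : y ∈ Ioo (-b) b) :
    pvAntideriv b y (-b) = pvAntideriv b y b := by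
  obtain ⟨hy₁, hy₂⟩ := hy
  have hb : b ≠ 0 := by linarith
  rw [pvAntideriv, pvAntideriv, pvDenom_left, pvDenom_right, log_mul hb (by linarith),
    log_mul hb (by linarith), show -b - y = -(b + y) by ring, log_neg_eq_log]
  ring

theorem pvAntideriv_sub_sub_eq (ε : ℝ) :
    pvAntideriv b y (y - ε) - pvAntideriv b y (y + ε) =
      (log (pvDenom b y (y + ε)) - log (pvDenom b y (y - ε))) / √(b ^ 2 - y ^ 2) := by
  rw [pvAntideriv, pvAntideriv, show y - ε - y = -ε by ring, show y + ε - y = ε by ring,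
    log_neg_eq_log]
  ring

theorem tendsto_pvAntideriv_sub_sub (hy : y ∈ Ioo (-b) b) :
    Tendsto (fun ε => pvAntideriv b y (y - ε) - pvAntideriv b y (y + ε)) (nhds 0) (nhds 0) := by
  have hD : pvDenom b y y ≠ 0 := (pvDenom_pos hy (Ioo_subset_Icc_self hy)).ne'
  have hcont : ContinuousAt (fun ε => (log (pvDenom b y (y + ε)) - log (pvDenom b y (y - ε))) /
      √(b ^ 2 - y ^ 2)) 0 := by
    have := continuous_pvDenom (b := b) (y := y)
    fun_prop (disch := simpa using hD)
  simpa only [pvAntideriv_sub_sub_eq, add_zero, sub_zero, sub_self, zero_div] using hcont.tendsto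

end

theorem stmt_9_general (b y : ℝ) (hy : y ∈ Set.Ioo (-b) b) :
    Filter.Tendsto
      (fun ε : ℝ =>
        (∫ x in (-b)..(y - ε), 1 / ((x - y) * Real.sqrt (b ^ 2 - x ^ 2))) +
          ∫ x in (y + ε)..b, 1 / ((x - y) * Real.sqrt (b ^ 2 - x ^ 2)))
      (nhdsWithin 0 (Set.Ioi 0)) (nhds 0) := by
  have hδ : 0 < min (y + b) (b - y) := lt_min (by linarith [hy.1]) (by linarith [hy.2])
  refine ((tendsto_pvAntideriv_sub_sub hy).mono_left nhdsWithin_le_nhds).congr' ?_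
  filter_upwards [Ioo_mem_nhdsGT hδ] with ε ⟨hε₀, hε⟩
  obtain ⟨hεl, hεr⟩ := lt_min_iff.1 hε
  rw [integral_pv_left hy (by linarith) (by linarith),
    integral_pv_right hy (by linarith) (by linarith), pvAntideriv_left_eq_right hy]
  ring

/-- The Cauchy principal value `P∫_{-b}^{b} dx/((x-y)√(b²-x²)) = 0` for `y ∈ (-b,b)`. -/
theorem stmt_9 (b y : ℝ) (hb : 0 < b) (hy : y ∈ Set.Ioo (-b) b) :
    Filter.Tendsto
      (fun ε : ℝ =>
        (∫ x in (-b)..(y - ε), 1 / ((x - y) * Real.sqrt (b ^ 2 - x ^ 2))) +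
          ∫ x in (y + ε)..b, 1 / ((x - y) * Real.sqrt (b ^ 2 - x ^ 2)))
      (nhdsWithin 0 (Set.Ioi 0)) (nhds 0) :=
  stmt_9_general b y hy
end

section
/- For any $b>0$ and any $y\in[-b,b]$, $\int_{-b}^{b}\frac{\ln|x-y|}{\sqrt{b^2-x^2}}\,dx = \pi\ln\frac{b}{2}$; in particular this integral is independent of $y$. -/
/-!
Substituting `x = b cos θ` turns the integral into `∫₀^π log |b cos θ - b cos φ| dθ`, where
`y = b cos φ`. As `cos` is symmetric about `π`, this is half the integral over the full period
`[0, 2π]`, and there `b cos θ - b cos φ = -2b sin((θ + φ)/2) sin((θ - φ)/2)` splits the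
logarithm into the constant `log 2b` and two shifted copies of `log sin`. Since `Real.log` is
even, `log ∘ sin` is `π`-periodic, so each copy integrates to `2 ∫₀^π log sin = -2π log 2`,
whatever the shift.
-/

open Real intervalIntegral MeasureTheory Set

theorem integral_div_sqrt_sq_sub_sq {b : ℝ} (hb : 0 < b) (f : ℝ → ℝ) :
    ∫ x in -b..b, f x / √(b ^ 2 - x ^ 2) = ∫ θ in 0..π, f (b * cos θ) := by
  have himage : (fun θ => b * cos θ) '' Icc 0 π = Icc (-b) b := by
    rw [← image_image (b * ·) cos, bijOn_cos.image_eq, image_mul_left_Icc hb.le (by norm_num)]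
    simp
  have hanti : AntitoneOn (fun θ => b * cos θ) (Icc 0 π) :=
    fun x hx y hy hxy => mul_le_mul_of_nonneg_left (strictAntiOn_cos.antitoneOn hx hy hxy) hb.le
  have hsubst := integral_image_eq_integral_deriv_smul_of_antitoneOn measurableSet_Icc
    (fun θ _ => ((hasDerivAt_cos θ).const_mul b).hasDerivWithinAt) hanti
    (fun x => f x / √(b ^ 2 - x ^ 2))
  rw [himage] at hsubst
  rw [integral_of_le (by linarith), integral_of_le pi_pos.le, ← integral_Icc_eq_integral_Ioc,
    hsubst, integral_Icc_eq_integral_Ioo, integral_Ioc_eq_integral_Ioo]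
  refine setIntegral_congr_fun measurableSet_Ioo fun θ hθ => ?_
  have hsin : 0 < sin θ := sin_pos_of_pos_of_lt_pi hθ.1 hθ.2
  have hsqrt : √(b ^ 2 - (b * cos θ) ^ 2) = b * sin θ := by
    rw [show b ^ 2 - (b * cos θ) ^ 2 = (b * sin θ) ^ 2 by
      linear_combination (-b ^ 2) * sin_sq_add_cos_sq θ, sqrt_sq (by positivity)]
  simp only [smul_eq_mul, hsqrt]
  field_simp

theorem integral_log_sin_half_add (c : ℝ) :
    ∫ θ in 0..2 * π, log (sin (θ / 2 + c)) = -(2 * π * log 2) := by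
  have hper : Function.Periodic (fun x => log (sin x)) π := fun x => by
    simp [sin_add_pi, log_neg_eq_log]
  rw [integral_comp_div_add (f := fun x => log (sin x)) two_ne_zero, zero_div, zero_add,
    show 2 * π / 2 + c = c + π by ring, hper.intervalIntegral_add_eq c 0, zero_add,
    integral_log_sin_zero_pi, smul_eq_mul]
  ring

theorem intervalIntegrable_log_sin_half_add (c a b : ℝ) :
    IntervalIntegrable (fun θ => log (sin (θ / 2 + c))) volume a b :=
  (show AnalyticOnNhd ℝ (fun θ => sin (θ / 2 + c)) _ from
    fun _ _ => by fun_prop).meromorphicOn.intervalIntegrable_log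

theorem ae_sin_half_add_ne_zero (c : ℝ) : ∀ᵐ θ : ℝ, sin (θ / 2 + c) ≠ 0 := by
  have hcount : {θ : ℝ | sin (θ / 2 + c) = 0}.Countable := by
    refine (countable_range fun n : ℤ => 2 * (n * π - c)).mono ?_
    intro θ hθ
    obtain ⟨n, hn⟩ := sin_eq_zero_iff.mp hθ
    exact ⟨n, by simp only; rw [hn]; ring⟩
  simpa using hcount.ae_notMem volume

theorem log_abs_mul_cos_sub_mul_cos {b θ φ : ℝ} (hb : b ≠ 0)
    (h₁ : sin (θ / 2 + φ / 2) ≠ 0) (h₂ : sin (θ / 2 - φ / 2) ≠ 0) :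
    log |b * cos θ - b * cos φ|
      = log (2 * b) + log (sin (θ / 2 + φ / 2)) + log (sin (θ / 2 - φ / 2)) := by
  have hfactor : b * cos θ - b * cos φ
      = -(2 * b) * sin (θ / 2 + φ / 2) * sin (θ / 2 - φ / 2) := by
    rw [← mul_sub, cos_sub_cos]; ring_nf
  rw [hfactor, log_abs, log_mul (by simp [hb, h₁]) h₂, log_mul (by simpa using hb) h₁,
    log_neg_eq_log]

theorem integral_log_abs_mul_cos_sub_mul_cos_two_pi {b : ℝ} (hb : b ≠ 0) (φ : ℝ) :
    ∫ θ in 0..2 * π, log |b * cos θ - b * cos φ| = 2 * π * log (b / 2) := by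
  have hsplit : ∫ θ in 0..2 * π, log |b * cos θ - b * cos φ|
      = ∫ θ in 0..2 * π,
          (log (2 * b) + log (sin (θ / 2 + φ / 2)) + log (sin (θ / 2 + -(φ / 2)))) := by
    refine integral_congr_ae ?_
    filter_upwards [ae_sin_half_add_ne_zero (φ / 2), ae_sin_half_add_ne_zero (-(φ / 2))]
      with θ h₁ h₂ _
    rw [← sub_eq_add_neg] at h₂ ⊢
    exact log_abs_mul_cos_sub_mul_cos hb h₁ h₂
  have hint (c : ℝ) := intervalIntegrable_log_sin_half_add c 0 (2 * π)
  rw [hsplit, integral_add (intervalIntegrable_const.add (hint _)) (hint _),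
    integral_add intervalIntegrable_const (hint _),
    intervalIntegral.integral_const, integral_log_sin_half_add, integral_log_sin_half_add,
    log_mul two_ne_zero hb, log_div hb two_ne_zero, smul_eq_mul]
  ring

theorem integral_comp_cos_zero_two_pi {E : Type*} [NormedAddCommGroup E] [NormedSpace ℝ E]
    {g : ℝ → E} (hg : IntervalIntegrable (fun θ => g (cos θ)) volume 0 π) :
    ∫ θ in 0..2 * π, g (cos θ) = (2 : ℝ) • ∫ θ in 0..π, g (cos θ) := by
  have hreflect := integral_comp_sub_left (fun θ => g (cos θ)) (2 * π) (a := 0) (b := π)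
  simp only [cos_two_pi_sub, sub_zero, show 2 * π - π = π by ring] at hreflect
  have hg' : IntervalIntegrable (fun θ => g (cos θ)) volume π (2 * π) := by
    simpa [cos_two_pi_sub, show 2 * π - π = π by ring] using (hg.comp_sub_left (2 * π)).symm
  rw [← integral_add_adjacent_intervals hg hg', ← hreflect, two_smul]

theorem integral_log_abs_mul_cos_sub {b y : ℝ} (hb : 0 < b) (hy : y ∈ Icc (-b) b) :
    ∫ θ in 0..π, log |b * cos θ - y| = π * log (b / 2) := by
  have hyb : y / b ∈ Icc (-1) 1 :=
    ⟨by rw [le_div_iff₀ hb]; linarith [hy.1], by rw [div_le_one hb]; exact hy.2⟩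
  obtain ⟨φ, -, hφ⟩ := bijOn_cos.surjOn hyb
  obtain rfl : b * cos φ = y := by rw [hφ]; field_simp
  have hint : IntervalIntegrable (fun θ => log |b * cos θ - b * cos φ|) volume 0 π :=
    (show AnalyticOnNhd ℝ (fun θ => b * cos θ - b * cos φ) _ from
      fun _ _ => by fun_prop).meromorphicOn.intervalIntegrable_log_norm
  have htwo := integral_comp_cos_zero_two_pi (g := fun x => log |b * x - b * cos φ|) hint
  rw [integral_log_abs_mul_cos_sub_mul_cos_two_pi hb.ne', smul_eq_mul] at htwo
  linarith

/-- For `b > 0` and `y ∈ [-b,b]`,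
`∫_{-b}^{b} ln|x-y| / √(b²-x²) dx = π ln(b/2)`, independent of `y`. -/
theorem stmt_11 (b : ℝ) (hb : 0 < b) :
    ∀ y ∈ Set.Icc (-b) b,
      ∫ x in (-b)..b, Real.log |x - y| / Real.sqrt (b ^ 2 - x ^ 2)
        = Real.pi * Real.log (b / 2) := by
  intro y hy
  rw [integral_div_sqrt_sq_sub_sq hb fun x => log |x - y|]
  exact integral_log_abs_mul_cos_sub hb hy
end
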